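/- arXiv:2303.02854 — 12 statements merged into one kernel-verified Lean document; each statement's English description precedes it below -/
import Mathlib

section
/- For any x ≥ 0, C ∈ [0,1], Δ > 0, and 0 ≤ ω ≤ ω' with Δ ≥ ω' - ω, the inequality C·x^ω ≤ x^{ω'} + C^{ω'/Δ} holds. -/
theorem young_bridge (x C Δ ω ω' : ℝ)
    (hx : 0 ≤ x) (hC0 : 0 ≤ C) (hC1 : C ≤ 1) (hΔ : 0 < Δ)
    (hω : 0 ≤ ω) (hωω' : ω ≤ ω') (hgap : ω' - ω ≤ Δ) :
    C * x ^ ω ≤ x ^ ω' + C ^ (ω' / Δ) := by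
  rcases eq_or_lt_of_le hC0 with hC | hC
  · simp [← hC]
    positivity
  rcases le_or_gt x 1 with hx1 | hx1
  · rcases le_or_gt C (x ^ Δ) with h | h
    · have hx0 : 0 < x := by
        rcases eq_or_lt_of_le hx with h0 | h0
        · exfalso
          rw [← h0, Real.zero_rpow hΔ.ne'] at h
          linarith
        · exact h0
      have h1 : C * x ^ ω ≤ x ^ (Δ + ω) := by
        rw [Real.rpow_add hx0]
        exact mul_le_mul_of_nonneg_right h (Real.rpow_nonneg hx ω)
      have h2 : x ^ (Δ + ω) ≤ x ^ ω' :=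
        Real.rpow_le_rpow_of_exponent_ge hx0 hx1 (by linarith)
      have h3 : (0:ℝ) ≤ C ^ (ω' / Δ) := Real.rpow_nonneg hC0 _
      linarith
    · have hxc : x ≤ C ^ (1 / Δ) := by
        have := Real.rpow_le_rpow (Real.rpow_nonneg hx Δ) h.le (by positivity : (0:ℝ) ≤ 1 / Δ)
        rwa [← Real.rpow_mul hx, mul_one_div, div_self hΔ.ne', Real.rpow_one] at this
      have h1 : C * x ^ ω ≤ C * (C ^ (1 / Δ)) ^ ω :=
        mul_le_mul_of_nonneg_left (Real.rpow_le_rpow hx hxc hω) hC0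
      have h2 : C * (C ^ (1 / Δ)) ^ ω = C ^ (1 + ω / Δ) := by
        rw [← Real.rpow_mul hC0, Real.rpow_add hC, Real.rpow_one, one_div, inv_mul_eq_div]
      have h3 : C ^ (1 + ω / Δ) ≤ C ^ (ω' / Δ) := by
        apply Real.rpow_le_rpow_of_exponent_ge hC hC1
        rw [div_le_iff₀ hΔ, add_mul, one_mul, div_mul_cancel₀ _ hΔ.ne']
        linarith
      have h4 : (0:ℝ) ≤ x ^ ω' := Real.rpow_nonneg hx _
      linarith
  · have h1 : x ^ ω ≤ x ^ ω' := Real.rpow_le_rpow_of_exponent_le hx1.le hωω'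
    have h2 : C * x ^ ω ≤ x ^ ω' := by
      calc C * x ^ ω ≤ 1 * x ^ ω' := by
            apply mul_le_mul hC1 h1 (Real.rpow_nonneg hx ω) zero_le_one
        _ = x ^ ω' := one_mul _
    have h3 : (0:ℝ) ≤ C ^ (ω' / Δ) := Real.rpow_nonneg hC0 _
    linarith
end

section
/- Fix α ∈ (0,1) and let f(w) = |w|^{(2-α)/(1-α)} on ℝ. Then for all w, w' ∈ ℝ, |f'(w') - f'(w)| ≤ ((2-α)^{1-α}/(1-α)^{2-α})·|w'-w|·max_{θ∈[0,1]} |f'(θw' + (1-θ)w)|^α. In particular f belongs to the α-symmetric generalized-smooth class L*_sym(α) with L₀ arbitrary positive and L₁ = (2-α)^{1-α}/(1-α)^{2-α}. -/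
/-!
With `q = α / (1 - α)` and `c = (2 - α) / (1 - α)` we have `f' x = c · x|x|^q`, whose derivative
`c (q + 1) |x|^q` grows with `|x|`. The mean value theorem therefore bounds `|f' w' - f' w|` by
`c (q + 1) M^q |w' - w|` with `M = max |w| |w'|`. On the other hand `|f' x|^α = c^α |x|^q`
because `(q + 1) α = q`, so the supremum over the segment is attained at an endpoint and equals
`c^α M^q`. The constant `L₁ = (2 - α)^(1 - α) / (1 - α)^(2 - α)` is exactly `c (q + 1) / c^α`.
-/

open Set Real Asymptotics Topology

lemma hasDerivAt_mul_abs_rpow {q : ℝ} (hq : 0 < q) (x : ℝ) :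
    HasDerivAt (fun y : ℝ => y * |y| ^ q) ((q + 1) * |x| ^ q) x := by
  rcases eq_or_ne x 0 with rfl | hx
  · have h_tendsto : Filter.Tendsto (fun y : ℝ => |y| ^ q) (𝓝 0) (𝓝 0) := by
      simpa [zero_rpow hq.ne'] using (continuous_abs.rpow_const fun _ => Or.inr hq.le).tendsto 0
    rw [hasDerivAt_iff_isLittleO]
    simpa [zero_rpow hq.ne'] using
      (isBigO_refl (fun y : ℝ => y) _).mul_isLittleO ((isLittleO_one_iff ℝ).2 h_tendsto)
  · have h_abs_rpow := (hasDerivAt_abs hx).rpow_const (p := q) (Or.inl (abs_ne_zero.2 hx))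
    refine ((hasDerivAt_id' x).mul h_abs_rpow).congr_deriv ?_
    have h_sign : x * SignType.sign x / |x| = 1 := by
      rcases hx.lt_or_gt with h | h <;> simp [h, abs_of_neg, abs_of_pos, hx]
    rw [rpow_sub_one (abs_ne_zero.2 hx)]
    linear_combination (q * |x| ^ q) * h_sign

lemma abs_le_max_abs_abs_of_mem_uIcc {a b x : ℝ} (hx : x ∈ uIcc a b) : |x| ≤ max |a| |b| := by
  rcases mem_uIcc.1 hx with ⟨h₁, h₂⟩ | ⟨h₁, h₂⟩
  · exact abs_le_max_abs_abs h₁ h₂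
  · exact max_comm |a| |b| ▸ abs_le_max_abs_abs h₁ h₂

lemma abs_mul_abs_rpow_sub_le {q : ℝ} (hq : 0 < q) (x y : ℝ) :
    |y * |y| ^ q - x * |x| ^ q| ≤ (q + 1) * max |x| |y| ^ q * |y - x| := by
  refine (convex_uIcc x y).norm_image_sub_le_of_norm_hasDerivWithin_le
    (fun z _ => (hasDerivAt_mul_abs_rpow hq z).hasDerivWithinAt) (fun z hz => ?_)
    left_mem_uIcc right_mem_uIcc
  rw [norm_of_nonneg (by positivity)]
  gcongr
  exact abs_le_max_abs_abs_of_mem_uIcc hz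

lemma csSup_image_abs_segment_eq {g : ℝ → ℝ} (hg : MonotoneOn g (Ici 0)) (w w' : ℝ) :
    sSup ((fun θ : ℝ => g |θ * w' + (1 - θ) * w|) '' Icc 0 1) = g (max |w| |w'|) := by
  refine IsGreatest.csSup_eq ⟨?_, ?_⟩
  · rcases max_choice |w| |w'| with h | h <;> rw [h]
    · exact ⟨0, by simp, by simp⟩
    · exact ⟨1, by simp, by simp⟩
  · rintro _ ⟨θ, hθ, rfl⟩
    refine hg (mem_Ici.2 (abs_nonneg _)) (mem_Ici.2 (le_max_of_le_left (abs_nonneg w)))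
       (abs_le_max_abs_abs_of_mem_uIcc ?_)
    rw [← segment_eq_uIcc]
    exact ⟨1 - θ, θ, sub_nonneg.2 hθ.2, hθ.1, by ring, by simp [add_comm]⟩

lemma abs_rpow_add_one_mul_sign (q x : ℝ) (hq : q + 1 ≠ 0) :
    |x| ^ (q + 1) * Real.sign x = x * |x| ^ q := by
  rw [rpow_add_one' (abs_nonneg x) hq]
  rcases lt_trichotomy x 0 with hx | rfl | hx
  · simp [hx, abs_of_neg, Real.sign_of_neg, mul_comm]
  · simp
  · simp [hx, abs_of_pos, Real.sign_of_pos, mul_comm]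

lemma abs_mul_abs_rpow (q x : ℝ) (hq : q + 1 ≠ 0) : |x * |x| ^ q| = |x| ^ (q + 1) := by
  rw [abs_mul, abs_of_nonneg (rpow_nonneg (abs_nonneg x) q), rpow_add_one' (abs_nonneg x) hq,
    mul_comm]

lemma rpow_one_sub_div_rpow_two_sub_mul_rpow {α : ℝ} (hα : α < 1) :
    (2 - α) ^ (1 - α) / (1 - α) ^ (2 - α) * ((2 - α) / (1 - α)) ^ α
      = (2 - α) / (1 - α) * (α / (1 - α) + 1) := by
  have h₁ : 0 < 1 - α := sub_pos.2 hα
  have h₂ : 0 < 2 - α := by linarith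
  rw [div_rpow h₂.le h₁.le, div_mul_div_comm, ← rpow_add h₂, ← rpow_add h₁,
    show 1 - α + α = 1 by ring, rpow_one,
    show 2 - α + α = (2 : ℕ) by norm_num, rpow_natCast]
  field_simp
  ring_nf

theorem poly_in_sym_class (α : ℝ) (hα : α ∈ Set.Ioo (0:ℝ) 1)
    (f' : ℝ → ℝ)
    (hf' : ∀ w, f' w = ((2 - α) / (1 - α)) * |w| ^ ((1:ℝ) / (1 - α)) * Real.sign w) :
    (∀ w w' : ℝ, |f' w' - f' w| ≤
      ((2 - α) ^ (1 - α) / (1 - α) ^ (2 - α)) * |w' - w| *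
        sSup ((fun θ : ℝ => |f' (θ * w' + (1 - θ) * w)| ^ α) '' Set.Icc 0 1)) ∧
    (∀ L₀ : ℝ, 0 < L₀ → ∀ w w' : ℝ, |f' w' - f' w| ≤
      (L₀ + ((2 - α) ^ (1 - α) / (1 - α) ^ (2 - α)) *
        sSup ((fun θ : ℝ => |f' (θ * w' + (1 - θ) * w)| ^ α) '' Set.Icc 0 1)) * |w' - w|) := by
  obtain ⟨hα₀, hα₁⟩ := hα
  set q := α / (1 - α) with hq_def
  set c := (2 - α) / (1 - α)
  have hq : 0 < q := div_pos hα₀ (sub_pos.2 hα₁)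
  have hc : 0 < c := div_pos (by linarith) (sub_pos.2 hα₁)
  have hq₁ : q + 1 ≠ 0 := by positivity
  have hexp : 1 / (1 - α) = q + 1 := by rw [hq_def]; field_simp [(sub_pos.2 hα₁).ne']; ring
  have hK : (2 - α) ^ (1 - α) / (1 - α) ^ (2 - α) * c ^ α = c * (q + 1) :=
    rpow_one_sub_div_rpow_two_sub_mul_rpow hα₁
  have hf'_eq (x : ℝ) : f' x = c * (x * |x| ^ q) := by
    rw [hf', hexp, mul_assoc, abs_rpow_add_one_mul_sign q x hq₁]
  have hf'_rpow (x : ℝ) : |f' x| ^ α = c ^ α * |x| ^ q := by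
    rw [hf'_eq, abs_mul, abs_of_pos hc, abs_mul_abs_rpow q x hq₁,
      mul_rpow hc.le (by positivity), ← rpow_mul (abs_nonneg x), ← hexp, hq_def,
      one_div_mul_eq_div]
  have hsup (w w' : ℝ) : sSup ((fun θ : ℝ => |f' (θ * w' + (1 - θ) * w)| ^ α) '' Icc 0 1)
      = c ^ α * max |w| |w'| ^ q := by
    simp_rw [hf'_rpow]
    refine csSup_image_abs_segment_eq (g := fun t => c ^ α * t ^ q) (fun s hs t _ hst => ?_) w w'
    exact mul_le_mul_of_nonneg_left (rpow_le_rpow hs hst hq.le) (by positivity)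
  have hbound (w w' : ℝ) : |f' w' - f' w| ≤
      (2 - α) ^ (1 - α) / (1 - α) ^ (2 - α) * |w' - w| * (c ^ α * max |w| |w'| ^ q) :=
    calc |f' w' - f' w| = c * |w' * |w'| ^ q - w * |w| ^ q| := by
          rw [hf'_eq, hf'_eq, ← mul_sub, abs_mul, abs_of_pos hc]
      _ ≤ c * ((q + 1) * max |w| |w'| ^ q * |w' - w|) := by
          gcongr; exact abs_mul_abs_rpow_sub_le hq w w'
      _ = _ := by
          linear_combination (-(max |w| |w'| ^ q * |w' - w|)) * hK
  refine ⟨fun w w' => hsup w w' ▸ hbound w w', fun L₀ hL₀ w w' => ?_⟩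
  rw [hsup]
  linarith [hbound w w', mul_nonneg hL₀.le (abs_nonneg (w' - w))]
end

section
/- Fix α ∈ (0,1), let f(w) = |w|^{(2-α)/(1-α)} on ℝ, and let 0 < α̃ < α. Then there do not exist constants L₀, L₁ > 0 such that for all w, w' ∈ ℝ, |f'(w') - f'(w)| ≤ |w'-w|·(L₀ + L₁·max_{θ∈[0,1]}|f'(θw'+(1-θ)w)|^{α̃}). That is, f ∉ L*_sym(α̃). -/
theorem poly_not_in_smaller_sym_class (α αt : ℝ) (hα : α ∈ Set.Ioo (0:ℝ) 1)
    (hαt0 : 0 < αt) (hαtα : αt < α)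
    (f' : ℝ → ℝ)
    (hf' : ∀ w, f' w = ((2 - α) / (1 - α)) * |w| ^ ((1:ℝ) / (1 - α)) * Real.sign w) :
    ¬ ∃ L₀ L₁ : ℝ, 0 < L₀ ∧ 0 < L₁ ∧ ∀ w w' : ℝ,
      |f' w' - f' w| ≤ |w' - w| *
        (L₀ + L₁ * sSup ((fun θ : ℝ => |f' (θ * w' + (1 - θ) * w)| ^ αt) '' Set.Icc 0 1)) := by
  obtain ⟨hα0, hα1⟩ := hα
  rintro ⟨L₀, L₁, hL₀, hL₁, hineq⟩
  set c : ℝ := (2 - α) / (1 - α) with hc_def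
  have h1α : (0:ℝ) < 1 - α := by linarith
  have hc : 0 < c := div_pos (by linarith) h1α
  set β : ℝ := 1 / (1 - α) with hβ_def
  have hβ1 : 1 < β := by
    rw [hβ_def, lt_div_iff₀ h1α]; linarith
  set γ : ℝ := 1 + β * αt with hγ_def
  have hγ1 : 1 ≤ γ := by
    have : 0 < β * αt := by positivity
    linarith
  have hβγ : 0 < β - γ := by
    have h : β - γ = (α - αt) / (1 - α) := by
      rw [hγ_def, hβ_def]; field_simp; ring
    rw [h]; exact div_pos (by linarith) h1α
  set K : ℝ := (L₀ + L₁ * c ^ αt) / c with hK_def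
  have hcα : 0 < c ^ αt := Real.rpow_pos_of_pos hc αt
  have hK : 0 < K := div_pos (by nlinarith) hc
  set t : ℝ := max 1 ((K + 1) ^ (β - γ)⁻¹) with ht_def
  have ht1 : (1:ℝ) ≤ t := le_max_left _ _
  have ht0 : (0:ℝ) < t := lt_of_lt_of_le one_pos ht1
  -- t ^ (β - γ) ≥ K + 1
  have htK : K + 1 ≤ t ^ (β - γ) := by
    have h1 : (K + 1) ^ (β - γ)⁻¹ ≤ t := le_max_right _ _
    have h2 : ((K + 1) ^ (β - γ)⁻¹) ^ (β - γ) ≤ t ^ (β - γ) :=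
      Real.rpow_le_rpow (Real.rpow_nonneg (by linarith) _) h1 (le_of_lt hβγ)
    rwa [← Real.rpow_mul (by linarith : (0:ℝ) ≤ K + 1),
      inv_mul_cancel₀ (ne_of_gt hβγ), Real.rpow_one] at h2
  -- values of f'
  have hf'0 : f' 0 = 0 := by rw [hf']; simp
  have hf't : f' t = c * t ^ β := by
    rw [hf', Real.sign_of_pos ht0, abs_of_pos ht0, mul_one]
  -- bound on the elements of the sup set
  have hsup_le : sSup ((fun θ : ℝ => |f' (θ * t + (1 - θ) * 0)| ^ αt) '' Set.Icc 0 1)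
      ≤ (c * t ^ β) ^ αt := by
    apply Real.sSup_le
    · rintro x ⟨θ, ⟨hθ0, hθ1⟩, rfl⟩
      simp only [mul_zero, add_zero]
      have hθt : |θ * t| ≤ t := by
        rw [abs_of_nonneg (by positivity)]
        nlinarith
      have hfle : |f' (θ * t)| ≤ c * t ^ β := by
        rw [hf', abs_mul, abs_mul, abs_of_pos hc, abs_of_nonneg (Real.rpow_nonneg (abs_nonneg _) _)]
        have hsign : |Real.sign (θ * t)| ≤ 1 := by
          rcases lt_trichotomy (θ * t) 0 with h | h | h
          · rw [Real.sign_of_neg h]; simp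
          · rw [h]; simp
          · rw [Real.sign_of_pos h]; simp
        have hpow : |θ * t| ^ ((1:ℝ) / (1 - α)) ≤ t ^ β :=
          Real.rpow_le_rpow (abs_nonneg _) hθt (by positivity)
        calc c * |θ * t| ^ ((1:ℝ) / (1 - α)) * |Real.sign (θ * t)|
            ≤ c * |θ * t| ^ ((1:ℝ) / (1 - α)) * 1 := by
              apply mul_le_mul_of_nonneg_left hsign (by positivity)
          _ = c * |θ * t| ^ ((1:ℝ) / (1 - α)) := mul_one _
          _ ≤ c * t ^ β := by nlinarith
      exact Real.rpow_le_rpow (abs_nonneg _) hfle (le_of_lt hαt0)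
    · positivity
  -- apply the hypothesis at w = 0, w' = t
  have hmain := hineq 0 t
  rw [hf'0, hf't, sub_zero, sub_zero, abs_of_nonneg (by positivity : (0:ℝ) ≤ c * t ^ β),
    abs_of_pos ht0] at hmain
  have hmain2 : c * t ^ β ≤ t * (L₀ + L₁ * (c * t ^ β) ^ αt) := by
    calc c * t ^ β ≤ t * (L₀ + L₁ * sSup ((fun θ : ℝ =>
            |f' (θ * t + (1 - θ) * 0)| ^ αt) '' Set.Icc 0 1)) := hmain
      _ ≤ t * (L₀ + L₁ * (c * t ^ β) ^ αt) := by
          apply mul_le_mul_of_nonneg_left _ (le_of_lt ht0)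
          have := mul_le_mul_of_nonneg_left hsup_le (le_of_lt hL₁)
          linarith
  -- rewrite RHS
  have hrw : t * (L₀ + L₁ * (c * t ^ β) ^ αt) ≤ (L₀ + L₁ * c ^ αt) * t ^ γ := by
    have h1 : (c * t ^ β) ^ αt = c ^ αt * t ^ (β * αt) := by
      rw [Real.mul_rpow (le_of_lt hc) (by positivity), ← Real.rpow_mul (le_of_lt ht0)]
    have ht_le : t ≤ t ^ γ := by
      calc t = t ^ (1:ℝ) := (Real.rpow_one t).symm
        _ ≤ t ^ γ := Real.rpow_le_rpow_of_exponent_le ht1 hγ1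
    have h2 : t * (c ^ αt * t ^ (β * αt)) = c ^ αt * t ^ γ := by
      rw [hγ_def, Real.rpow_add ht0, Real.rpow_one]; ring
    rw [h1, mul_add, mul_comm L₁ (c ^ αt * t ^ (β * αt)), ← mul_assoc t, h2]
    have : L₀ * t ≤ L₀ * t ^ γ := mul_le_mul_of_nonneg_left ht_le (le_of_lt hL₀)
    nlinarith [Real.rpow_pos_of_pos ht0 γ, Real.rpow_pos_of_pos hc αt]
  -- combine: c * t ^ β ≤ K * c * t ^ γ
  have hcomb : c * t ^ β ≤ K * c * t ^ γ := by
    have : K * c = L₀ + L₁ * c ^ αt := by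
      rw [hK_def]; field_simp
    rw [this]; linarith
  -- but t ^ β = t ^ γ * t ^ (β - γ) ≥ (K+1) * t ^ γ
  have hsplit : t ^ β = t ^ γ * t ^ (β - γ) := by
    rw [← Real.rpow_add ht0]; ring_nf
  have htγ : 0 < t ^ γ := Real.rpow_pos_of_pos ht0 γ
  rw [hsplit] at hcomb
  have : t ^ (β - γ) ≤ K := by
    have h := hcomb
    have hcγ : 0 < c * t ^ γ := by positivity
    nlinarith
  linarith
end

section
/- Fix α ∈ (0,1) and let f(w) = |w|^{(2-α)/(1-α)} on ℝ. Then there do not exist constants L₀, L₁ > 0 such that for all w, w' ∈ ℝ, |f'(w') - f'(w)| ≤ |w'-w|·(L₀ + L₁|f'(w)|). That is, f does not belong to the asymmetric generalized-smooth class L*_asym. -/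
/-!
At `w = 0` the derivative `f'` vanishes, so the asymmetric condition with base point `0` forces
the linear growth bound `|f' w'| ≤ L₀ |w'|`. But `f'` grows like `|w'| ^ p` with
`p = 1 / (1 - α) > 1`, which beats every linear function.
-/

open Filter

lemma exists_mul_lt_mul_rpow {c p : ℝ} (hc : 0 < c) (hp : 1 < p) (L : ℝ) :
    ∃ t : ℝ, 0 < t ∧ L * t < c * t ^ p := by
  have hgrowth : Tendsto (fun t : ℝ => c * t ^ (p - 1)) atTop atTop :=
    (tendsto_rpow_atTop (by linarith)).const_mul_atTop hc
  obtain ⟨t, hLt, ht⟩ :=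
    ((hgrowth.eventually_gt_atTop L).and (eventually_gt_atTop 0)).exists
  refine ⟨t, ht, ?_⟩
  calc L * t < c * t ^ (p - 1) * t := mul_lt_mul_of_pos_right hLt ht
    _ = c * t ^ p := by
      rw [mul_assoc, ← Real.rpow_add_one ht.ne', sub_add_cancel]

lemma abs_le_mul_abs_of_asym_bound_at_zero {g : ℝ → ℝ} {L₀ L₁ : ℝ} (hg0 : g 0 = 0)
    (h : ∀ w w' : ℝ, |g w' - g w| ≤ |w' - w| * (L₀ + L₁ * |g w|)) (w : ℝ) :
    |g w| ≤ L₀ * |w| := by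
  simpa [hg0, mul_comm] using h 0 w

theorem poly_not_in_asym_class (α : ℝ) (hα : α ∈ Set.Ioo (0:ℝ) 1)
    (f' : ℝ → ℝ)
    (hf' : ∀ w, f' w = ((2 - α) / (1 - α)) * |w| ^ ((1:ℝ) / (1 - α)) * Real.sign w) :
    ¬ ∃ L₀ L₁ : ℝ, 0 < L₀ ∧ 0 < L₁ ∧ ∀ w w' : ℝ,
      |f' w' - f' w| ≤ |w' - w| * (L₀ + L₁ * |f' w|) := by
  rintro ⟨L₀, L₁, -, -, h⟩
  obtain ⟨hα0, hα1⟩ := hα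
  have hc : 0 < (2 - α) / (1 - α) := div_pos (by linarith) (by linarith)
  have hp : 1 < (1:ℝ) / (1 - α) := by rw [lt_div_iff₀ (by linarith)]; linarith
  have hf'_pos : ∀ t, 0 < t → f' t = (2 - α) / (1 - α) * t ^ ((1:ℝ) / (1 - α)) := fun t ht => by
    rw [hf', abs_of_pos ht, Real.sign_of_pos ht, mul_one]
  obtain ⟨t, ht, hlt⟩ := exists_mul_lt_mul_rpow hc hp L₀
  have hbound := abs_le_mul_abs_of_asym_bound_at_zero (by simp [hf']) h t
  rw [hf'_pos t ht, abs_of_pos (by positivity), abs_of_pos ht] at hbound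
  linarith
end

section
/- Let f(w) = e^w + e^{-w} on ℝ and let α̃ ∈ (0,1). Then there do not exist constants L₀, L₁ > 0 such that for all w, w' ∈ ℝ, |f'(w') - f'(w)| ≤ |w'-w|·(L₀ + L₁·max_{θ∈[0,1]}|f'(θw'+(1-θ)w)|^{α̃}). -/
theorem exp_not_in_smaller_sym_class (αt : ℝ) (hαt : αt ∈ Set.Ioo (0:ℝ) 1)
    (f' : ℝ → ℝ) (hf' : ∀ w, f' w = Real.exp w - Real.exp (-w)) :
    ¬ ∃ L₀ L₁ : ℝ, 0 < L₀ ∧ 0 < L₁ ∧ ∀ w w' : ℝ,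
      |f' w' - f' w| ≤ |w' - w| *
        (L₀ + L₁ * sSup ((fun θ : ℝ => |f' (θ * w' + (1 - θ) * w)| ^ αt) '' Set.Icc 0 1)) := by
  obtain ⟨hα0, hα1⟩ := hαt
  rintro ⟨L₀, L₁, hL₀, hL₁, h⟩
  have he1 : (1:ℝ) < Real.exp 1 := by
    have := Real.add_one_lt_exp (x := 1) one_ne_zero
    linarith
  set C : ℝ := (L₀ + L₁ * Real.exp αt) / (Real.exp 1 - 1) with hC
  have hCpos : 0 < C := by
    apply div_pos
    · positivity
    · linarith
  set w : ℝ := max 1 (Real.log C / (1 - αt) + 1) with hw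
  have hw1 : (1:ℝ) ≤ w := le_max_left _ _
  have hw0 : (0:ℝ) ≤ w := by linarith
  have h1α : 0 < 1 - αt := by linarith
  have hwgt : Real.log C < (1 - αt) * w := by
    have h1 : Real.log C / (1 - αt) + 1 ≤ w := le_max_right _ _
    have key : (1 - αt) * (Real.log C / (1 - αt)) = Real.log C :=
      mul_div_cancel₀ _ (ne_of_gt h1α)
    nlinarith [mul_le_mul_of_nonneg_left h1 h1α.le]
  have hexpC : C < Real.exp ((1 - αt) * w) := by
    calc C = Real.exp (Real.log C) := (Real.exp_log hCpos).symm
    _ < Real.exp ((1 - αt) * w) := Real.exp_lt_exp.mpr hwgt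
  -- bound on the sup
  have hsup : sSup ((fun θ : ℝ => |f' (θ * (w + 1) + (1 - θ) * w)| ^ αt) '' Set.Icc 0 1)
      ≤ Real.exp (αt * (w + 1)) := by
    apply Real.sSup_le _ (Real.exp_pos _).le
    rintro x ⟨θ, ⟨hθ0, hθ1⟩, rfl⟩
    have harg : θ * (w + 1) + (1 - θ) * w = w + θ := by ring
    show |f' (θ * (w + 1) + (1 - θ) * w)| ^ αt ≤ _
    rw [harg, hf']
    have hnn : 0 ≤ Real.exp (w + θ) - Real.exp (-(w + θ)) := by
      have : Real.exp (-(w + θ)) ≤ Real.exp (w + θ) :=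
        Real.exp_le_exp.mpr (by linarith)
      linarith
    have hle : |Real.exp (w + θ) - Real.exp (-(w + θ))| ≤ Real.exp (w + 1) := by
      rw [abs_of_nonneg hnn]
      have h1 : Real.exp (w + θ) ≤ Real.exp (w + 1) :=
        Real.exp_le_exp.mpr (by linarith)
      have h2 : 0 < Real.exp (-(w + θ)) := Real.exp_pos _
      linarith
    calc |Real.exp (w + θ) - Real.exp (-(w + θ))| ^ αt
        ≤ Real.exp (w + 1) ^ αt :=
          Real.rpow_le_rpow (abs_nonneg _) hle hα0.le
      _ = Real.exp ((w + 1) * αt) := (Real.exp_mul _ _).symm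
      _ = Real.exp (αt * (w + 1)) := by rw [mul_comm]
  -- lower bound on the increment
  have hlhs : (Real.exp 1 - 1) * Real.exp w ≤ |f' (w + 1) - f' w| := by
    refine le_trans ?_ (le_abs_self _)
    rw [hf', hf']
    have e1 : Real.exp (w + 1) = Real.exp w * Real.exp 1 := Real.exp_add _ _
    have e2 : Real.exp (-(w + 1)) = Real.exp (-w) * Real.exp (-1) := by
      rw [← Real.exp_add]; ring_nf
    have e3 : Real.exp (-1) < 1 := Real.exp_lt_one_iff.mpr (by norm_num)
    nlinarith [Real.exp_pos (-w)]
  -- apply the hypothesis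
  have hspec := h w (w + 1)
  have habs : |w + 1 - w| = 1 := by norm_num
  rw [habs, one_mul] at hspec
  have hchain : (Real.exp 1 - 1) * Real.exp w ≤ L₀ + L₁ * Real.exp (αt * (w + 1)) := by
    have := mul_le_mul_of_nonneg_left hsup hL₁.le
    linarith
  -- contradiction
  have eA : Real.exp (αt * (w + 1)) = Real.exp αt * Real.exp (αt * w) := by
    rw [← Real.exp_add]; ring_nf
  have eB : Real.exp w = Real.exp ((1 - αt) * w) * Real.exp (αt * w) := by
    rw [← Real.exp_add]; ring_nf
  have h1exp : (1:ℝ) ≤ Real.exp (αt * w) :=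
    Real.one_le_exp (by positivity)
  have hCdef : C * (Real.exp 1 - 1) = L₀ + L₁ * Real.exp αt := by
    rw [hC, div_mul_cancel₀]
    linarith
  have hCx : C * (Real.exp 1 - 1) * Real.exp (αt * w)
      = (L₀ + L₁ * Real.exp αt) * Real.exp (αt * w) := by rw [hCdef]
  have hint1 : C * ((Real.exp 1 - 1) * Real.exp (αt * w))
      < Real.exp ((1 - αt) * w) * ((Real.exp 1 - 1) * Real.exp (αt * w)) :=
    mul_lt_mul_of_pos_right hexpC
      (mul_pos (by linarith) (Real.exp_pos (αt * w)))
  have hint2 : L₀ * 1 ≤ L₀ * Real.exp (αt * w) :=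
    mul_le_mul_of_nonneg_left h1exp hL₀.le
  nlinarith [hint1, hint2, hCx, hchain, eA, eB]
end

section
/- Let f(w) = e^w + e^{-w} on ℝ. Then there do not exist constants L₀, L₁ > 0 such that for all w, w' ∈ ℝ, |f'(w') - f'(w)| ≤ |w'-w|·(L₀ + L₁|f'(w)|), i.e., f ∉ L*_asym. -/
theorem exp_not_in_asym_class
    (f' : ℝ → ℝ) (hf' : ∀ w, f' w = Real.exp w - Real.exp (-w)) :
    ¬ ∃ L₀ L₁ : ℝ, 0 < L₀ ∧ 0 < L₁ ∧ ∀ w w' : ℝ,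
      |f' w' - f' w| ≤ |w' - w| * (L₀ + L₁ * |f' w|) := by
  rintro ⟨L₀, L₁, hL₀, hL₁, h⟩
  set t : ℝ := 4 * L₀ + 4 with ht
  have htpos : 0 < t := by linarith
  have h0 : f' 0 = 0 := by rw [hf']; simp
  have hkey := h 0 t
  rw [h0] at hkey
  simp only [abs_zero, mul_zero, add_zero, sub_zero] at hkey
  have hft : f' t = Real.exp t - Real.exp (-t) := hf' t
  have h1 : t / 2 + 1 ≤ Real.exp (t / 2) := Real.add_one_le_exp _
  have h2 : Real.exp t = Real.exp (t / 2) * Real.exp (t / 2) := by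
    rw [← Real.exp_add]; ring_nf
  have h3 : Real.exp (-t) ≤ 1 := Real.exp_le_one_iff.mpr (by linarith)
  have h4 : 0 < Real.exp (-t) := Real.exp_pos _
  have h5 : t * t / 4 - 1 ≤ f' t := by
    rw [hft, h2]; nlinarith
  have h6 : f' t ≤ |f' t| := le_abs_self _
  have h7 : |t| = t := abs_of_pos htpos
  rw [h7] at hkey
  nlinarith
end

section
/- Let f : ℝ^d → ℝ be differentiable and suppose there exist L₀, L₁ > 0 and α ∈ [0,1] such that for all w, w', ‖∇f(w')-∇f(w)‖ ≤ (L₀ + L₁·max_{θ∈[0,1]}‖∇f(θw'+(1-θ)w)‖^α)·‖w'-w‖. Then for all w, w', ‖∇f(w')-∇f(w)‖ ≤ (L₀ + L₁·∫₀¹ ‖∇f(θw'+(1-θ)w)‖^α dθ)·‖w'-w‖, and conversely the integral condition implies the max condition. -/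
/-!
Write `p θ = θ • w' + (1 - θ) • w` and `ρ = ‖∇f‖ ^ α`. Since `ρ ∘ p` is continuous, its average
over `[0, 1]` is at most its maximum, so the integral condition implies the max condition.
Conversely, applying the max condition to the short segments `[p t, p z]` and letting `z ↓ t`,
where the maximum of `ρ ∘ p` over `[t, z]` tends to `ρ (p t)`, bounds the upper right Dini
derivative of `t ↦ ‖∇f (p t) - ∇f w‖` by `‖w' - w‖ * (L₀ + L₁ * ρ (p t))`; the comparison
principle for Dini derivatives then integrates this bound over `[0, 1]`.
-/

open Set Filter Topology

theorem norm_sub_le_integral_of_eventually_norm_sub_lt {E : Type*} [NormedAddCommGroup E]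
    {g : ℝ → E} {φ : ℝ → ℝ} {a b : ℝ} (hab : a ≤ b) (hg : ContinuousOn g (Icc a b))
    (hφ : Continuous φ)
    (hslope : ∀ t ∈ Ico a b, ∀ r, φ t < r → ∀ᶠ z in 𝓝[>] t, ‖g z - g t‖ < r * (z - t)) :
    ‖g b - g a‖ ≤ ∫ t in a..b, φ t := by
  have hprim (t : ℝ) : HasDerivAt (fun t => ∫ s in a..t, φ s) (φ t) t :=
    (hφ.integral_hasStrictDerivAt a t).hasDerivAt
  refine image_le_of_liminf_slope_right_le_deriv_boundary (f := fun t => ‖g t - g a‖)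
    (hg.sub continuousOn_const).norm (by simp)
    (fun t _ => (hprim t).continuousAt.continuousWithinAt)
    (fun t _ => (hprim t).hasDerivWithinAt) (fun t ht r hr => ?_) ⟨hab, le_rfl⟩
  refine (((hslope t ht r hr).and self_mem_nhdsWithin).mono fun z ⟨hz, htz⟩ => ?_).frequently
  rw [slope_def_field, div_lt_iff₀ (sub_pos.2 htz)]
  calc ‖g z - g a‖ - ‖g t - g a‖ ≤ ‖g z - g t‖ := by
        simpa only [sub_sub_sub_cancel_right] using norm_sub_norm_le (g z - g a) (g t - g a)
    _ < r * (z - t) := hz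

theorem integral_le_sub_mul_sSup_image {φ : ℝ → ℝ} {a b : ℝ} (hab : a ≤ b)
    (hφ : ContinuousOn φ (Icc a b)) :
    ∫ x in a..b, φ x ≤ (b - a) * sSup (φ '' Icc a b) := by
  have hbdd : BddAbove (φ '' Icc a b) := isCompact_Icc.bddAbove_image hφ
  calc ∫ x in a..b, φ x ≤ ∫ _ in a..b, sSup (φ '' Icc a b) :=
        intervalIntegral.integral_mono_on hab (hφ.intervalIntegrable_of_Icc hab)
          intervalIntegrable_const fun x hx => le_csSup hbdd (mem_image_of_mem φ hx)
    _ = (b - a) * sSup (φ '' Icc a b) := by simp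

section Segment

variable {E F : Type*} [NormedAddCommGroup E] [NormedSpace ℝ E] [NormedAddCommGroup F]
  {u : E → F} {ρ : E → ℝ} {L₀ L₁ : ℝ}

theorem eventually_norm_sub_lt_of_max_condition (hL₁ : 0 ≤ L₁) (hρ : Continuous ρ)
    (H : ∀ w w' : E, ‖u w' - u w‖ ≤
      (L₀ + L₁ * sSup ((fun θ : ℝ => ρ (θ • w' + (1 - θ) • w)) '' Icc 0 1)) * ‖w' - w‖)
    (w w' : E) {t r : ℝ} (hr : ‖w' - w‖ * (L₀ + L₁ * ρ (t • w' + (1 - t) • w)) < r) :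
    ∀ᶠ z in 𝓝[>] t, ‖u (z • w' + (1 - z) • w) - u (t • w' + (1 - t) • w)‖ < r * (z - t) := by
  set p : ℝ → E := fun θ => θ • w' + (1 - θ) • w
  obtain ⟨σ, hσr, hσ⟩ : ∃ σ, ‖w' - w‖ * (L₀ + L₁ * σ) < r ∧ ρ (p t) < σ := by
    have hcont : Continuous fun σ => ‖w' - w‖ * (L₀ + L₁ * σ) := by fun_prop
    exact ((hcont.continuousAt.eventually_lt continuousAt_const hr).filter_mono
      nhdsWithin_le_nhds |>.and (self_mem_nhdsWithin (s := Ioi (ρ (p t))))).exists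
  obtain ⟨v, htv, hv⟩ := exists_Ico_subset_of_mem_nhds
    ((hρ.comp (by fun_prop : Continuous p)).continuousAt.eventually_lt continuousAt_const hσ)
    (exists_gt t)
  filter_upwards [Ioo_mem_nhdsGT htv] with z ⟨htz, hzv⟩
  have hsup : sSup ((fun θ : ℝ => ρ (θ • p z + (1 - θ) • p t)) '' Icc 0 1) ≤ σ := by
    refine csSup_le ((nonempty_Icc.2 zero_le_one).image _) ?_
    rintro _ ⟨θ, hθ, rfl⟩
    have hpθ : θ • p z + (1 - θ) • p t = p (t + θ * (z - t)) := by simp only [p]; module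
    dsimp only
    rw [hpθ]
    exact (hv ⟨by nlinarith [hθ.1], by nlinarith [hθ.2]⟩).le
  have hpz : p z - p t = (z - t) • (w' - w) := by simp only [p]; module
  calc ‖u (p z) - u (p t)‖ ≤ (L₀ + L₁ * σ) * ‖p z - p t‖ := (H _ _).trans (by gcongr)
    _ = ‖w' - w‖ * (L₀ + L₁ * σ) * (z - t) := by
        rw [hpz, norm_smul, Real.norm_of_nonneg (sub_pos.2 htz).le]; ring
    _ < r * (z - t) := mul_lt_mul_of_pos_right hσr (sub_pos.2 htz)

theorem integral_condition_of_max_condition (hL₁ : 0 ≤ L₁) (hu : Continuous u)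
    (hρ : Continuous ρ)
    (H : ∀ w w' : E, ‖u w' - u w‖ ≤
      (L₀ + L₁ * sSup ((fun θ : ℝ => ρ (θ • w' + (1 - θ) • w)) '' Icc 0 1)) * ‖w' - w‖)
    (w w' : E) :
    ‖u w' - u w‖ ≤ (L₀ + L₁ * ∫ θ in (0:ℝ)..1, ρ (θ • w' + (1 - θ) • w)) * ‖w' - w‖ := by
  have hρp : Continuous fun θ : ℝ => ρ (θ • w' + (1 - θ) • w) := by fun_prop
  have key := norm_sub_le_integral_of_eventually_norm_sub_lt zero_le_one
    (g := fun θ => u (θ • w' + (1 - θ) • w)) (by fun_prop)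
    (φ := fun θ => ‖w' - w‖ * (L₀ + L₁ * ρ (θ • w' + (1 - θ) • w))) (by fun_prop)
    fun _ _ _ hr => eventually_norm_sub_lt_of_max_condition hL₁ hρ H w w' hr
  rw [intervalIntegral.integral_const_mul, intervalIntegral.integral_add intervalIntegrable_const
    ((hρp.intervalIntegrable 0 1).const_mul L₁), intervalIntegral.integral_const_mul] at key
  simpa [mul_comm ‖w' - w‖] using key

theorem max_condition_of_integral_condition (hL₁ : 0 ≤ L₁) (hρ : Continuous ρ)
    (H : ∀ w w' : E, ‖u w' - u w‖ ≤
      (L₀ + L₁ * ∫ θ in (0:ℝ)..1, ρ (θ • w' + (1 - θ) • w)) * ‖w' - w‖)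
    (w w' : E) :
    ‖u w' - u w‖ ≤
      (L₀ + L₁ * sSup ((fun θ : ℝ => ρ (θ • w' + (1 - θ) • w)) '' Icc 0 1)) * ‖w' - w‖ := by
  refine (H w w').trans ?_
  have := integral_le_sub_mul_sSup_image zero_le_one
    (φ := fun θ : ℝ => ρ (θ • w' + (1 - θ) • w)) (by fun_prop)
  rw [sub_zero, one_mul] at this
  gcongr

end Segment

theorem max_condition_iff_integral_condition_general {d : ℕ}
    (f : EuclideanSpace ℝ (Fin d) → ℝ)
    (hgrad : Continuous (gradient f))
    (L₀ L₁ α : ℝ) (hL₁ : 0 < L₁) (hα : α ∈ Set.Icc (0:ℝ) 1) :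
    (∀ w w' : EuclideanSpace ℝ (Fin d),
      ‖gradient f w' - gradient f w‖ ≤
        (L₀ + L₁ * sSup ((fun θ : ℝ => ‖gradient f (θ • w' + (1 - θ) • w)‖ ^ α) '' Set.Icc 0 1))
          * ‖w' - w‖) ↔
    (∀ w w' : EuclideanSpace ℝ (Fin d),
      ‖gradient f w' - gradient f w‖ ≤
        (L₀ + L₁ * ∫ θ in (0:ℝ)..1, ‖gradient f (θ • w' + (1 - θ) • w)‖ ^ α) * ‖w' - w‖) := by
  have hρ : Continuous fun x => ‖gradient f x‖ ^ α :=
    hgrad.norm.rpow_const fun _ => Or.inr hα.1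
  exact ⟨fun H => integral_condition_of_max_condition (ρ := fun x => ‖gradient f x‖ ^ α)
      hL₁.le hgrad hρ H,
    fun H => max_condition_of_integral_condition (ρ := fun x => ‖gradient f x‖ ^ α) hL₁.le hρ H⟩

theorem max_condition_iff_integral_condition {d : ℕ}
    (f : EuclideanSpace ℝ (Fin d) → ℝ) (hf : Differentiable ℝ f)
    (hgrad : Continuous (gradient f))
    (L₀ L₁ α : ℝ) (hL₀ : 0 < L₀) (hL₁ : 0 < L₁) (hα : α ∈ Set.Icc (0:ℝ) 1) :
    (∀ w w' : EuclideanSpace ℝ (Fin d),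
      ‖gradient f w' - gradient f w‖ ≤
        (L₀ + L₁ * sSup ((fun θ : ℝ => ‖gradient f (θ • w' + (1 - θ) • w)‖ ^ α) '' Set.Icc 0 1))
          * ‖w' - w‖) ↔
    (∀ w w' : EuclideanSpace ℝ (Fin d),
      ‖gradient f w' - gradient f w‖ ≤
        (L₀ + L₁ * ∫ θ in (0:ℝ)..1, ‖gradient f (θ • w' + (1 - θ) • w)‖ ^ α) * ‖w' - w‖) :=
  max_condition_iff_integral_condition_general f hgrad L₀ L₁ α hL₁ hα
end

section
/- Let f : ℝ^d → ℝ be differentiable, α ∈ (0,1), and suppose for all w, w' ∈ ℝ^d, ‖∇f(w')-∇f(w)‖ ≤ ‖w'-w‖·(K₀ + K₁‖∇f(w)‖^α + K₂‖w'-w‖^{α/(1-α)}) with constants K₀, K₁, K₂ ≥ 0. Then for all w, w', f(w') ≤ f(w) + ⟨∇f(w), w'-w⟩ + (1/2)‖w'-w‖²·(K₀ + K₁‖∇f(w)‖^α + 2K₂‖w'-w‖^{α/(1-α)}). -/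
open RealInnerProductSpace Set

/-!
Along the segment from `w` to `w'`, the smoothness hypothesis, with `‖t (w' - w)‖ ^ (α / (1 - α))`
bounded by its value at `t = 1`, becomes a Lipschitz-type bound
`‖∇f(w + t(w' - w)) - ∇f w‖ ≤ t ‖w' - w‖ L`.
Then `t ↦ f (w + t(w' - w)) - t ⟪∇f w, w' - w⟫ - t²/2 ‖w' - w‖² L` has nonpositive derivative
on `[0, 1]`, and comparing its values at `0` and `1` gives the classical quadratic upper bound.
-/

section DescentLemma

variable {E : Type*} [NormedAddCommGroup E] [InnerProductSpace ℝ E] [CompleteSpace E]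
  {f : E → ℝ}

theorem hasDerivAt_comp_add_smul (hf : Differentiable ℝ f) (w v : E) (t : ℝ) :
    HasDerivAt (fun s : ℝ => f (w + s • v)) ⟪gradient f (w + t • v), v⟫ t := by
  have hline : HasDerivAt (fun s : ℝ => w + s • v) v t := by
    simpa using ((hasDerivAt_id t).smul_const v).const_add w
  simpa [InnerProductSpace.toDual_apply_apply, Function.comp_def] using
    (hf (w + t • v)).hasGradientAt.hasFDerivAt.comp_hasDerivAt t hline

theorem le_add_inner_add_of_norm_gradient_sub_le (hf : Differentiable ℝ f) {w v : E} {L : ℝ}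
    (hL : ∀ t ∈ Icc (0 : ℝ) 1, ‖gradient f (w + t • v) - gradient f w‖ ≤ t * ‖v‖ * L) :
    f (w + v) ≤ f w + ⟪gradient f w, v⟫ + 1 / 2 * ‖v‖ ^ 2 * L := by
  set φ : ℝ → ℝ := fun t => f (w + t • v) - t * ⟪gradient f w, v⟫ - t ^ 2 / 2 * (‖v‖ ^ 2 * L)
  have hφ' : ∀ t, HasDerivAt φ
      (⟪gradient f (w + t • v), v⟫ - ⟪gradient f w, v⟫ - t * (‖v‖ ^ 2 * L)) t := by
    intro t
    have hquad : HasDerivAt (fun s : ℝ => s ^ 2 / 2 * (‖v‖ ^ 2 * L)) (t * (‖v‖ ^ 2 * L)) t :=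
      (((hasDerivAt_pow 2 t).div_const 2).mul_const _).congr_deriv (by push_cast; ring)
    exact ((hasDerivAt_comp_add_smul hf w v t).sub
      ((hasDerivAt_id t).mul_const _ |>.congr_deriv (one_mul _))).sub hquad
  have hφ'_nonpos : ∀ t ∈ interior (Icc (0 : ℝ) 1),
      ⟪gradient f (w + t • v), v⟫ - ⟪gradient f w, v⟫ - t * (‖v‖ ^ 2 * L) ≤ 0 := by
    intro t ht
    have ht := interior_subset ht
    calc ⟪gradient f (w + t • v), v⟫ - ⟪gradient f w, v⟫ - t * (‖v‖ ^ 2 * L)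
        = ⟪gradient f (w + t • v) - gradient f w, v⟫ - t * (‖v‖ ^ 2 * L) := by
          rw [inner_sub_left]
      _ ≤ ‖gradient f (w + t • v) - gradient f w‖ * ‖v‖ - t * (‖v‖ ^ 2 * L) := by
          gcongr; exact real_inner_le_norm _ _
      _ ≤ t * ‖v‖ * L * ‖v‖ - t * (‖v‖ ^ 2 * L) := by gcongr; exact hL t ht
      _ = 0 := by ring
  have hanti : AntitoneOn φ (Icc 0 1) :=
    antitoneOn_of_hasDerivWithinAt_nonpos (convex_Icc 0 1)
      (fun t _ => (hφ' t).continuousAt.continuousWithinAt)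
      (fun t _ => (hφ' t).hasDerivWithinAt) hφ'_nonpos
  have h10 : φ 1 ≤ φ 0 := hanti (by simp) (by simp) zero_le_one
  simp only [φ, one_smul, zero_smul, add_zero, one_pow, zero_pow two_ne_zero, one_mul, zero_mul,
    zero_div, sub_zero] at h10
  linarith

end DescentLemma

theorem descent_lemma_poly_general {d : ℕ}
    (f : EuclideanSpace ℝ (Fin d) → ℝ) (hf : Differentiable ℝ f)
    (α K₀ K₁ K₂ : ℝ) (hα : α ∈ Set.Ioo (0:ℝ) 1)
    (hK₂ : 0 ≤ K₂)
    (hsmooth : ∀ w w' : EuclideanSpace ℝ (Fin d),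
      ‖gradient f w' - gradient f w‖ ≤
        ‖w' - w‖ * (K₀ + K₁ * ‖gradient f w‖ ^ α + K₂ * ‖w' - w‖ ^ (α / (1 - α)))) :
    ∀ w w' : EuclideanSpace ℝ (Fin d),
      f w' ≤ f w + ⟪gradient f w, w' - w⟫ +
        (1/2) * ‖w' - w‖ ^ 2 *
          (K₀ + K₁ * ‖gradient f w‖ ^ α + 2 * K₂ * ‖w' - w‖ ^ (α / (1 - α))) := by
  intro w w'
  set v := w' - w
  set p := α / (1 - α)
  have hp : 0 ≤ p := div_nonneg hα.1.le (sub_nonneg.2 hα.2.le)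
  have hsegment : ∀ t ∈ Icc (0 : ℝ) 1, ‖gradient f (w + t • v) - gradient f w‖ ≤
      t * ‖v‖ * (K₀ + K₁ * ‖gradient f w‖ ^ α + K₂ * ‖v‖ ^ p) := by
    intro t ⟨ht₀, ht₁⟩
    have htv : ‖t • v‖ = t * ‖v‖ := by rw [norm_smul, Real.norm_of_nonneg ht₀]
    have hpow : (t * ‖v‖) ^ p ≤ ‖v‖ ^ p := by
      gcongr; exact mul_le_of_le_one_left (norm_nonneg v) ht₁
    calc ‖gradient f (w + t • v) - gradient f w‖
        ≤ ‖t • v‖ * (K₀ + K₁ * ‖gradient f w‖ ^ α + K₂ * ‖t • v‖ ^ p) := by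
          simpa using hsmooth w (w + t • v)
      _ ≤ t * ‖v‖ * (K₀ + K₁ * ‖gradient f w‖ ^ α + K₂ * ‖v‖ ^ p) := by rw [htv]; gcongr
  have hdescent := le_add_inner_add_of_norm_gradient_sub_le hf hsegment
  rw [add_sub_cancel] at hdescent
  refine hdescent.trans ?_
  gcongr
  linarith

theorem descent_lemma_poly {d : ℕ}
    (f : EuclideanSpace ℝ (Fin d) → ℝ) (hf : Differentiable ℝ f)
    (α K₀ K₁ K₂ : ℝ) (hα : α ∈ Set.Ioo (0:ℝ) 1)
    (hK₀ : 0 ≤ K₀) (hK₁ : 0 ≤ K₁) (hK₂ : 0 ≤ K₂)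
    (hsmooth : ∀ w w' : EuclideanSpace ℝ (Fin d),
      ‖gradient f w' - gradient f w‖ ≤
        ‖w' - w‖ * (K₀ + K₁ * ‖gradient f w‖ ^ α + K₂ * ‖w' - w‖ ^ (α / (1 - α)))) :
    ∀ w w' : EuclideanSpace ℝ (Fin d),
      f w' ≤ f w + ⟪gradient f w, w' - w⟫ +
        (1/2) * ‖w' - w‖ ^ 2 *
          (K₀ + K₁ * ‖gradient f w‖ ^ α + 2 * K₂ * ‖w' - w‖ ^ (α / (1 - α))) :=
  descent_lemma_poly_general f hf α K₀ K₁ K₂ hα hK₂ hsmooth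
end

section
/- Let f : ℝ^d → ℝ be differentiable and suppose for all w, w' ∈ ℝ^d, ‖∇f(w')-∇f(w)‖ ≤ ‖w'-w‖·(L₀ + L₁‖∇f(w)‖)·exp(L₁‖w'-w‖) for some constants L₀, L₁ > 0. Then for all w, w', f(w') ≤ f(w) + ⟨∇f(w), w'-w⟩ + (1/2)‖w'-w‖²·(L₀ + L₁‖∇f(w)‖)·exp(L₁‖w'-w‖). -/
/-!
Along the segment `t ↦ w + t • (w' - w)`, `t ∈ [0, 1]`, the smoothness condition and
Cauchy–Schwarz bound the growth of the directional derivative linearly in `t`, the exponential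
factor being at most its value at `t = 1`. Subtracting the corresponding quadratic from
`t ↦ f (w + t • (w' - w))` leaves a function with nonpositive derivative on `[0, 1]`, so comparing
its values at `0` and `1` gives the inequality. No continuity of the gradient is needed.
-/

open RealInnerProductSpace Set Real

theorem le_add_add_half_of_hasDerivAt_le_add_mul {g g' : ℝ → ℝ} {a K : ℝ}
    (hg : ∀ t, HasDerivAt g (g' t) t) (hle : ∀ t ∈ Icc (0 : ℝ) 1, g' t ≤ a + t * K) :
    g 1 ≤ g 0 + a + K / 2 := by
  have hderiv (t : ℝ) :
      HasDerivAt (fun s ↦ g s - a * s - K / 2 * s ^ 2) (g' t - a - t * K) t := by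
    refine (((hg t).fun_sub ((hasDerivAt_id' t).const_mul a)).fun_sub
      ((hasDerivAt_pow 2 t).const_mul (K / 2))).congr_deriv ?_
    norm_num
    ring
  have hanti : AntitoneOn (fun s ↦ g s - a * s - K / 2 * s ^ 2) (Icc 0 1) :=
    antitoneOn_of_hasDerivWithinAt_nonpos (convex_Icc 0 1)
      (HasDerivAt.continuousOn fun t _ ↦ hderiv t) (fun t _ ↦ (hderiv t).hasDerivWithinAt)
      fun t ht ↦ sub_nonpos.2 (sub_le_iff_le_add'.2 (hle t (interior_subset ht)))
  have := hanti (left_mem_Icc.2 zero_le_one) (right_mem_Icc.2 zero_le_one) zero_le_one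
  norm_num at this
  linarith

section InnerProductSpace

variable {E : Type*} [NormedAddCommGroup E] [InnerProductSpace ℝ E]

theorem hasDerivAt_apply_add_smul [CompleteSpace E] {f : E → ℝ} {w v : E} {t : ℝ}
    (hf : DifferentiableAt ℝ f (w + t • v)) :
    HasDerivAt (fun s : ℝ ↦ f (w + s • v)) ⟪gradient f (w + t • v), v⟫ t := by
  have hline : HasDerivAt (fun s : ℝ ↦ w + s • v) v t := by
    simpa using ((hasDerivAt_id t).smul_const v).const_add w
  rw [inner_gradient_left]
  exact hf.hasFDerivAt.comp_hasDerivAt t hline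

theorem le_add_inner_gradient_add_of_inner_gradient_sub_le [CompleteSpace E] {f : E → ℝ}
    (hf : Differentiable ℝ f) {w v : E} {K : ℝ}
    (hK : ∀ t ∈ Icc (0 : ℝ) 1, ⟪gradient f (w + t • v) - gradient f w, v⟫ ≤ t * K) :
    f (w + v) ≤ f w + ⟪gradient f w, v⟫ + K / 2 := by
  simpa only [zero_smul, one_smul, add_zero] using
    le_add_add_half_of_hasDerivAt_le_add_mul (fun t ↦ hasDerivAt_apply_add_smul (hf _))
      fun t ht ↦ by
        linarith [inner_sub_left (𝕜 := ℝ) (gradient f (w + t • v)) (gradient f w) v, hK t ht]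

theorem inner_sub_le_of_norm_sub_le_mul_exp {G : E → E} {w v : E} {C L : ℝ} (hC : 0 ≤ C)
    (hL : 0 ≤ L) (hG : ∀ x, ‖G x - G w‖ ≤ ‖x - w‖ * C * exp (L * ‖x - w‖))
    {t : ℝ} (ht : t ∈ Icc (0 : ℝ) 1) :
    ⟪G (w + t • v) - G w, v⟫ ≤ t * (‖v‖ ^ 2 * C * exp (L * ‖v‖)) := by
  have hdist : ‖w + t • v - w‖ = t * ‖v‖ := by
    rw [add_sub_cancel_left, norm_smul, norm_of_nonneg ht.1]
  have htv : t * ‖v‖ ≤ ‖v‖ := mul_le_of_le_one_left (norm_nonneg v) ht.2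
  have ht₀ := ht.1
  calc ⟪G (w + t • v) - G w, v⟫
      ≤ ‖G (w + t • v) - G w‖ * ‖v‖ := real_inner_le_norm _ _
    _ ≤ t * ‖v‖ * C * exp (L * (t * ‖v‖)) * ‖v‖ := by
        rw [← hdist]
        gcongr
        exact hG _
    _ ≤ t * ‖v‖ * C * exp (L * ‖v‖) * ‖v‖ := by gcongr
    _ = t * (‖v‖ ^ 2 * C * exp (L * ‖v‖)) := by ring

end InnerProductSpace

theorem descent_lemma_exp {d : ℕ}
    (f : EuclideanSpace ℝ (Fin d) → ℝ) (hf : Differentiable ℝ f)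
    (L₀ L₁ : ℝ) (hL₀ : 0 < L₀) (hL₁ : 0 < L₁)
    (hsmooth : ∀ w w' : EuclideanSpace ℝ (Fin d),
      ‖gradient f w' - gradient f w‖ ≤
        ‖w' - w‖ * (L₀ + L₁ * ‖gradient f w‖) * Real.exp (L₁ * ‖w' - w‖)) :
    ∀ w w' : EuclideanSpace ℝ (Fin d),
      f w' ≤ f w + ⟪gradient f w, w' - w⟫ +
        (1/2) * ‖w' - w‖ ^ 2 * (L₀ + L₁ * ‖gradient f w‖) * Real.exp (L₁ * ‖w' - w‖) := by
  intro w w'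
  have hC : 0 ≤ L₀ + L₁ * ‖gradient f w‖ := by positivity
  have h := le_add_inner_gradient_add_of_inner_gradient_sub_le hf fun _ ht ↦
    inner_sub_le_of_norm_sub_le_mul_exp (v := w' - w) hC hL₁.le (hsmooth w) ht
  rw [add_sub_cancel] at h
  linarith
end

section
/- Let f : ℝ^d → ℝ be twice continuously differentiable and suppose ‖∇²f(w)‖ ≤ L₀ + L₁‖∇f(w)‖ for all w (operator norm), with L₀, L₁ > 0. Then for all w, w' ∈ ℝ^d, ‖∇f(w')-∇f(w)‖ ≤ (L₀ + L₁·∫₀¹ ‖∇f(θw'+(1-θ)w)‖ dθ)·‖w'-w‖. -/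
/-! Along the segment `θ ↦ θ • w' + (1 - θ) • w` the fundamental theorem of calculus writes
`∇f w' - ∇f w` as `∫₀¹ ∇²f(θ • w' + (1 - θ) • w) (w' - w) dθ`; bounding the integrand by the
operator norm and then by the Hessian hypothesis, pointwise in `θ`, gives the claim. -/

open intervalIntegral InnerProductSpace

theorem ContDiff.gradient {F : Type*} [NormedAddCommGroup F] [InnerProductSpace ℝ F]
    [CompleteSpace F] {f : F → ℝ} {m n : WithTop ℕ∞} (hf : ContDiff ℝ n f) (hmn : m + 1 ≤ n) :
    ContDiff ℝ m (gradient f) :=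
  (toDual ℝ F).symm.contDiff.comp (hf.fderiv_right hmn)

section

variable {E F : Type*} [NormedAddCommGroup E] [NormedSpace ℝ E] [NormedAddCommGroup F]
  [NormedSpace ℝ F] [CompleteSpace F] {g : E → F}

theorem ContDiff.sub_eq_integral_fderiv_segment (hg : ContDiff ℝ 1 g) (x y : E) :
    g y - g x = ∫ θ in (0:ℝ)..1, fderiv ℝ g (θ • y + (1 - θ) • x) (y - x) := by
  have hsegment (θ : ℝ) : HasDerivAt (fun t : ℝ => t • y + (1 - t) • x) (y - x) θ := by
    convert AffineMap.hasDerivAt_lineMap (a := x) (b := y) (x := θ) using 1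
    funext t
    rw [AffineMap.lineMap_apply_module, add_comm]
  have hderiv (θ : ℝ) : HasDerivAt (fun t : ℝ => g (t • y + (1 - t) • x))
      (fderiv ℝ g (θ • y + (1 - θ) • x) (y - x)) θ :=
    (hg.differentiable one_ne_zero _).hasFDerivAt.comp_hasDerivAt θ (hsegment θ)
  have hcont : Continuous fun θ : ℝ => fderiv ℝ g (θ • y + (1 - θ) • x) (y - x) :=
    ((hg.continuous_fderiv one_ne_zero).comp (by fun_prop)).clm_apply continuous_const
  rw [integral_eq_sub_of_hasDerivAt (fun θ _ => hderiv θ) (hcont.intervalIntegrable 0 1)]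
  simp

theorem ContDiff.norm_sub_le_integral_norm_fderiv_mul (hg : ContDiff ℝ 1 g) (x y : E) :
    ‖g y - g x‖ ≤ (∫ θ in (0:ℝ)..1, ‖fderiv ℝ g (θ • y + (1 - θ) • x)‖) * ‖y - x‖ := by
  have hcont : Continuous fun θ : ℝ => fderiv ℝ g (θ • y + (1 - θ) • x) :=
    (hg.continuous_fderiv one_ne_zero).comp (by fun_prop)
  rw [hg.sub_eq_integral_fderiv_segment x y, ← integral_mul_const]
  calc ‖∫ θ in (0:ℝ)..1, fderiv ℝ g (θ • y + (1 - θ) • x) (y - x)‖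
      ≤ ∫ θ in (0:ℝ)..1, ‖fderiv ℝ g (θ • y + (1 - θ) • x) (y - x)‖ :=
        norm_integral_le_integral_norm zero_le_one
    _ ≤ ∫ θ in (0:ℝ)..1, ‖fderiv ℝ g (θ • y + (1 - θ) • x)‖ * ‖y - x‖ :=
        integral_mono_on zero_le_one
          ((hcont.clm_apply continuous_const).norm.intervalIntegrable 0 1)
          ((hcont.norm.mul continuous_const).intervalIntegrable 0 1)
          fun θ _ => ContinuousLinearMap.le_opNorm _ _

theorem ContDiff.norm_sub_le_of_norm_fderiv_le (hg : ContDiff ℝ 1 g) {L₀ L₁ : ℝ}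
    (hbound : ∀ z, ‖fderiv ℝ g z‖ ≤ L₀ + L₁ * ‖g z‖) (x y : E) :
    ‖g y - g x‖ ≤ (L₀ + L₁ * ∫ θ in (0:ℝ)..1, ‖g (θ • y + (1 - θ) • x)‖) * ‖y - x‖ := by
  have hcont : Continuous fun θ : ℝ => ‖g (θ • y + (1 - θ) • x)‖ :=
    (hg.continuous.comp (by fun_prop)).norm
  have hint : ∫ θ in (0:ℝ)..1, ‖fderiv ℝ g (θ • y + (1 - θ) • x)‖ ≤
      L₀ + L₁ * ∫ θ in (0:ℝ)..1, ‖g (θ • y + (1 - θ) • x)‖ := by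
    calc ∫ θ in (0:ℝ)..1, ‖fderiv ℝ g (θ • y + (1 - θ) • x)‖
        ≤ ∫ θ in (0:ℝ)..1, L₀ + L₁ * ‖g (θ • y + (1 - θ) • x)‖ :=
          integral_mono_on zero_le_one
            (((hg.continuous_fderiv one_ne_zero).comp (by fun_prop)).norm.intervalIntegrable 0 1)
            ((continuous_const.add (continuous_const.mul hcont)).intervalIntegrable 0 1)
            fun θ _ => hbound _
      _ = L₀ + L₁ * ∫ θ in (0:ℝ)..1, ‖g (θ • y + (1 - θ) • x)‖ := by
          rw [integral_add (g := fun θ => L₁ * ‖g (θ • y + (1 - θ) • x)‖) intervalIntegrable_const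
            ((continuous_const.mul hcont).intervalIntegrable 0 1), integral_const_mul]
          simp
  exact (hg.norm_sub_le_integral_norm_fderiv_mul x y).trans
    (mul_le_mul_of_nonneg_right hint (norm_nonneg _))

end

theorem hessian_bound_implies_integral_condition_general {d : ℕ}
    (f : EuclideanSpace ℝ (Fin d) → ℝ) (hf : ContDiff ℝ 2 f)
    (L₀ L₁ : ℝ)
    (hhess : ∀ w : EuclideanSpace ℝ (Fin d),
      ‖fderiv ℝ (gradient f) w‖ ≤ L₀ + L₁ * ‖gradient f w‖) :
    ∀ w w' : EuclideanSpace ℝ (Fin d),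
      ‖gradient f w' - gradient f w‖ ≤
        (L₀ + L₁ * ∫ θ in (0:ℝ)..1, ‖gradient f (θ • w' + (1 - θ) • w)‖) * ‖w' - w‖ :=
  (hf.gradient (by norm_num)).norm_sub_le_of_norm_fderiv_le hhess

theorem hessian_bound_implies_integral_condition {d : ℕ}
    (f : EuclideanSpace ℝ (Fin d) → ℝ) (hf : ContDiff ℝ 2 f)
    (L₀ L₁ : ℝ) (hL₀ : 0 < L₀) (hL₁ : 0 < L₁)
    (hhess : ∀ w : EuclideanSpace ℝ (Fin d),
      ‖fderiv ℝ (gradient f) w‖ ≤ L₀ + L₁ * ‖gradient f w‖) :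
    ∀ w w' : EuclideanSpace ℝ (Fin d),
      ‖gradient f w' - gradient f w‖ ≤
        (L₀ + L₁ * ∫ θ in (0:ℝ)..1, ‖gradient f (θ • w' + (1 - θ) • w)‖) * ‖w' - w‖ :=
  hessian_bound_implies_integral_condition_general f hf L₀ L₁ hhess
end

section
/- Let ξ be a random variable and suppose ∇f_ξ(w) is an unbiased estimator of ∇f(w) with E‖∇f_ξ(w) - ∇f(w)‖² ≤ Γ²‖∇f(w)‖² + Λ² for constants Γ, Λ > 0. Then for any τ ∈ [0,2], E‖∇f_ξ(w)‖^τ ≤ (Γ^τ + 1)‖∇f(w)‖^τ + Λ^τ. -/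
/-!
Expanding the square around the mean, `E‖g‖² = E‖g - Eg‖² + ‖Eg‖² ≤ (Γ² + 1)‖G‖² + Λ²`.
Since `s ↦ s ^ (τ/2)` is concave, Jensen gives `E‖g‖^τ ≤ (E‖g‖²)^(τ/2)`, and subadditivity of
`s ↦ s ^ (τ/2)` splits the right-hand side into the three terms of the bound.
-/

open MeasureTheory

namespace Real

lemma rpow_le_one_add {x p : ℝ} (hx : 0 ≤ x) (hp0 : 0 ≤ p) (hp1 : p ≤ 1) : x ^ p ≤ 1 + x :=
  calc x ^ p = (1 + (x - 1)) ^ p := by ring_nf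
    _ ≤ 1 + p * (x - 1) := rpow_one_add_le_one_add_mul_self (by linarith) hp0 hp1
    _ ≤ 1 + x := by nlinarith

lemma sq_rpow_div_two {x : ℝ} (hx : 0 ≤ x) (p : ℝ) : (x ^ 2) ^ (p / 2) = x ^ p := by
  rw [← rpow_natCast_mul hx]
  ring_nf

lemma sq_mul_add_sq_add_sq_rpow_div_two_le {a x b p : ℝ} (ha : 0 ≤ a) (hx : 0 ≤ x) (hb : 0 ≤ b)
    (hp0 : 0 ≤ p) (hp2 : p ≤ 2) :
    ((a ^ 2 + 1) * x ^ 2 + b ^ 2) ^ (p / 2) ≤ (a ^ p + 1) * x ^ p + b ^ p := by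
  have hq0 : 0 ≤ p / 2 := by positivity
  have hq1 : p / 2 ≤ 1 := by linarith
  calc ((a ^ 2 + 1) * x ^ 2 + b ^ 2) ^ (p / 2)
      = ((a * x) ^ 2 + x ^ 2 + b ^ 2) ^ (p / 2) := by ring_nf
    _ ≤ ((a * x) ^ 2 + x ^ 2) ^ (p / 2) + (b ^ 2) ^ (p / 2) :=
        rpow_add_le_add_rpow (by positivity) (by positivity) hq0 hq1
    _ ≤ ((a * x) ^ 2) ^ (p / 2) + (x ^ 2) ^ (p / 2) + (b ^ 2) ^ (p / 2) := by
        gcongr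
        exact rpow_add_le_add_rpow (by positivity) (by positivity) hq0 hq1
    _ = (a ^ p + 1) * x ^ p + b ^ p := by
        rw [sq_rpow_div_two (by positivity), sq_rpow_div_two hx, sq_rpow_div_two hb,
          mul_rpow ha hx]
        ring

end Real

namespace MeasureTheory

variable {Ω : Type*} [MeasurableSpace Ω] {μ : Measure Ω}

lemma Integrable.rpow_const_of_le_one [IsFiniteMeasure μ] {f : Ω → ℝ} (hf : Integrable f μ)
    (hf0 : 0 ≤ᵐ[μ] f) {p : ℝ} (hp0 : 0 ≤ p) (hp1 : p ≤ 1) :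
    Integrable (fun ω => f ω ^ p) μ := by
  refine ((integrable_const 1).add hf).mono' (hf.1.aemeasurable.pow_const p).aestronglyMeasurable ?_
  filter_upwards [hf0] with ω hω
  rw [Real.norm_of_nonneg (Real.rpow_nonneg hω p)]
  exact Real.rpow_le_one_add hω hp0 hp1

lemma integral_rpow_le_rpow_integral [IsProbabilityMeasure μ] {f : Ω → ℝ} (hf : Integrable f μ)
    (hf0 : 0 ≤ᵐ[μ] f) {p : ℝ} (hp0 : 0 ≤ p) (hp1 : p ≤ 1) :
    ∫ ω, f ω ^ p ∂μ ≤ (∫ ω, f ω ∂μ) ^ p :=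
  (Real.concaveOn_rpow hp0 hp1).le_map_integral
    (continuousOn_id.rpow_const fun _ _ => Or.inr hp0) isClosed_Ici hf0 hf
    (hf.rpow_const_of_le_one hf0 hp0 hp1)

variable {E : Type*} [NormedAddCommGroup E] [InnerProductSpace ℝ E] {g : Ω → E}

lemma norm_sq_eq_norm_sub_sq_add_inner (x c : E) :
    ‖x‖ ^ 2 = ‖x - c‖ ^ 2 + 2 * inner ℝ x c - ‖c‖ ^ 2 := by
  rw [norm_sub_sq_real]
  ring

lemma Integrable.norm_sq_of_norm_sub_sq [IsFiniteMeasure μ] (hg : Integrable g μ)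
    (c : E) (hgc : Integrable (fun ω => ‖g ω - c‖ ^ 2) μ) : Integrable (fun ω => ‖g ω‖ ^ 2) μ := by
  rw [show (fun ω => ‖g ω‖ ^ 2) = _ from
    funext fun ω => norm_sq_eq_norm_sub_sq_add_inner (g ω) c]
  exact (hgc.add ((hg.inner_const c).const_mul 2)).sub (integrable_const _)

lemma integral_norm_sq_eq_integral_norm_sub_sq_add [CompleteSpace E] [IsProbabilityMeasure μ]
    (hg : Integrable g μ) (hgc : Integrable (fun ω => ‖g ω - ∫ ω, g ω ∂μ‖ ^ 2) μ) :
    ∫ ω, ‖g ω‖ ^ 2 ∂μ = ∫ ω, ‖g ω - ∫ ω, g ω ∂μ‖ ^ 2 ∂μ + ‖∫ ω, g ω ∂μ‖ ^ 2 := by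
  set m := ∫ ω, g ω ∂μ
  have hinner : ∫ ω, inner ℝ (g ω) m ∂μ = ‖m‖ ^ 2 := by
    simp_rw [real_inner_comm m]
    rw [integral_inner (𝕜 := ℝ) hg, real_inner_self_eq_norm_sq]
  have hlin : Integrable (fun ω => 2 * inner ℝ (g ω) m) μ := (hg.inner_const m).const_mul 2
  have hsum : Integrable (fun ω => ‖g ω - m‖ ^ 2 + 2 * inner ℝ (g ω) m) μ := hgc.add hlin
  rw [show (fun ω => ‖g ω‖ ^ 2) = _ from
      funext fun ω => norm_sq_eq_norm_sub_sq_add_inner (g ω) m,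
    integral_sub hsum (integrable_const _), integral_add hgc hlin,
    integral_const_mul, hinner, integral_const, probReal_univ, one_smul]
  ring

end MeasureTheory

theorem stochastic_gradient_moment_bound {d : ℕ} {Ω : Type*} [MeasurableSpace Ω]
    (μ : Measure Ω) [IsProbabilityMeasure μ]
    (g : Ω → EuclideanSpace ℝ (Fin d)) (G : EuclideanSpace ℝ (Fin d))
    (Γ Λ : ℝ) (hΓ : 0 < Γ) (hΛ : 0 < Λ)
    (hint : Integrable g μ)
    (hint2 : Integrable (fun ω => ‖g ω - G‖ ^ 2) μ)
    (hunbiased : ∫ ω, g ω ∂μ = G)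
    (hvar : ∫ ω, ‖g ω - G‖ ^ 2 ∂μ ≤ Γ ^ 2 * ‖G‖ ^ 2 + Λ ^ 2)
    (τ : ℝ) (hτ : τ ∈ Set.Icc (0:ℝ) 2) :
    ∫ ω, ‖g ω‖ ^ τ ∂μ ≤ (Γ ^ τ + 1) * ‖G‖ ^ τ + Λ ^ τ := by
  obtain ⟨hτ0, hτ2⟩ := hτ
  subst hunbiased
  have hsq := integral_norm_sq_eq_integral_norm_sub_sq_add hint hint2
  calc ∫ ω, ‖g ω‖ ^ τ ∂μ = ∫ ω, (‖g ω‖ ^ 2) ^ (τ / 2) ∂μ := by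
        simp_rw [Real.sq_rpow_div_two (norm_nonneg _)]
    _ ≤ (∫ ω, ‖g ω‖ ^ 2 ∂μ) ^ (τ / 2) :=
        integral_rpow_le_rpow_integral (hint.norm_sq_of_norm_sub_sq _ hint2)
          (ae_of_all _ fun _ => by positivity) (by positivity) (by linarith)
    _ ≤ ((Γ ^ 2 + 1) * ‖∫ ω, g ω ∂μ‖ ^ 2 + Λ ^ 2) ^ (τ / 2) := by
        gcongr
        linarith
    _ ≤ _ := Real.sq_mul_add_sq_add_sq_rpow_div_two_le hΓ.le (norm_nonneg _) hΛ.le hτ0 hτ2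
end

section
/- Fix 0 ≤ β < 1, set f(w) = e^w + e^{-w} on ℝ, and consider the iteration w_{t+1} = w_t - γ·f'(w_t)/|f'(w_t)|^β for any γ > 0. There exists a constant C > 1 such that (e^{|w|} - e^{-|w|})^{1-β} > 3|w| whenever |w| > C, and consequently if |w_0| > C then |w_t| > 2^t·C for all t ≥ 0, so the iteration diverges. -/
set_option maxHeartbeats 1000000 in
theorem beta_gd_diverges_exp (β γ : ℝ) (hβ0 : 0 ≤ β) (hβ1 : β < 1) (hγ : 0 < γ) :
    ∃ C : ℝ, 1 < C ∧
      (∀ x : ℝ, |x| > C → (Real.exp |x| - Real.exp (-|x|)) ^ (1 - β) > 3 * |x|) ∧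
      (∀ w : ℕ → ℝ,
        (∀ t, w (t + 1) = w t -
          γ * (Real.exp (w t) - Real.exp (-(w t))) / |Real.exp (w t) - Real.exp (-(w t))| ^ β) →
        |w 0| > C → ∀ t, |w t| > 2 ^ t * C) := by
  obtain ⟨c, hc⟩ : ∃ c : ℝ, c = 1 - β := ⟨_, rfl⟩
  have hc0 : 0 < c := by rw [hc]; linarith
  have hc1 : c ≤ 1 := by rw [hc]; linarith
  obtain ⟨K, hK⟩ : ∃ K : ℝ, K = 3 * max 1 γ⁻¹ := ⟨_, rfl⟩
  have hmax1 : (1:ℝ) ≤ max 1 γ⁻¹ := le_max_left _ _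
  have hK3 : (3:ℝ) ≤ K := by rw [hK]; nlinarith
  have hK0 : (0:ℝ) < K := by linarith
  have hKγ : (3:ℝ) ≤ γ * K := by
    have h1 : γ⁻¹ ≤ max 1 γ⁻¹ := le_max_right _ _
    have h2 : γ * γ⁻¹ = 1 := mul_inv_cancel₀ hγ.ne'
    rw [hK]; nlinarith
  obtain ⟨C, hCdef⟩ : ∃ C : ℝ, C = max 1 (8 * K / c ^ 2) + 1 := ⟨_, rfl⟩
  have hC1 : 1 < C := by
    have : (1:ℝ) ≤ max 1 (8 * K / c ^ 2) := le_max_left _ _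
    rw [hCdef]; linarith
  have hC0 : 0 < C := by linarith
  have hC8 : 8 * K / c ^ 2 < C := by
    have : 8 * K / c ^ 2 ≤ max 1 (8 * K / c ^ 2) := le_max_right _ _
    rw [hCdef]; linarith
  -- Key growth lemma
  have key : ∀ x : ℝ, x > C → (Real.exp x - Real.exp (-x)) ^ c > K * x := by
    intro x hx
    have hx1 : 1 < x := lt_trans hC1 hx
    have hx0 : 0 < x := by linarith
    have hexp2 : (2:ℝ) ≤ Real.exp x := by
      have := Real.add_one_le_exp x; linarith
    have hexpneg : Real.exp (-x) ≤ 1 := by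
      have := Real.exp_le_exp.mpr (show -x ≤ 0 by linarith)
      simpa [Real.exp_zero] using this
    have h2 : Real.exp x / 2 ≤ Real.exp x - Real.exp (-x) := by linarith
    have hmono : (Real.exp x / 2) ^ c ≤ (Real.exp x - Real.exp (-x)) ^ c :=
      Real.rpow_le_rpow (by positivity) h2 hc0.le
    have hsplit : (Real.exp x / 2) ^ c = Real.exp (x * c) / (2:ℝ) ^ c := by
      rw [Real.div_rpow (Real.exp_pos x).le (by norm_num), Real.exp_mul]
    have h2c : (2:ℝ) ^ c ≤ 2 := by
      calc (2:ℝ) ^ c ≤ (2:ℝ) ^ (1:ℝ) :=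
            Real.rpow_le_rpow_of_exponent_le (by norm_num) hc1
        _ = 2 := Real.rpow_one 2
    have h2cpos : (0:ℝ) < (2:ℝ) ^ c := Real.rpow_pos_of_pos (by norm_num) c
    have hdiv : Real.exp (x * c) / 2 ≤ Real.exp (x * c) / (2:ℝ) ^ c :=
      div_le_div_of_nonneg_left (Real.exp_pos _).le h2cpos h2c
    have hquad : (x * c / 2) ^ 2 ≤ Real.exp (x * c) := by
      have h1 : x * c / 2 + 1 ≤ Real.exp (x * c / 2) := Real.add_one_le_exp _
      have h2 : Real.exp (x * c / 2) ^ 2 = Real.exp (x * c) := by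
        rw [← Real.exp_nat_mul]; ring_nf
      have h3 : 0 ≤ x * c / 2 := by positivity
      nlinarith [Real.exp_pos (x * c / 2)]
    have hfinal : K * x < Real.exp (x * c) / 2 := by
      have hxK : 8 * K / c ^ 2 < x := lt_trans hC8 hx
      have hc2 : 0 < c ^ 2 := by positivity
      have h8K : 8 * K < c ^ 2 * x := by
        rw [div_lt_iff₀ hc2] at hxK; nlinarith
      have h8Kx : 8 * K * x < c ^ 2 * x * x := mul_lt_mul_of_pos_right h8K hx0
      nlinarith [hquad]
    calc K * x < Real.exp (x * c) / 2 := hfinal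
      _ ≤ Real.exp (x * c) / (2:ℝ) ^ c := hdiv
      _ = (Real.exp x / 2) ^ c := hsplit.symm
      _ ≤ (Real.exp x - Real.exp (-x)) ^ c := hmono
  refine ⟨C, hC1, ?_, ?_⟩
  · intro x hx
    have hkey := key |x| hx
    have habs : 0 ≤ |x| := abs_nonneg x
    rw [← hc]
    nlinarith
  · intro w hrec h0 t
    induction t with
    | zero => simpa using h0
    | succ t ih =>
      have h2t : (1:ℝ) ≤ 2 ^ t := one_le_pow₀ (by norm_num)
      have hxC : |w t| > C := by
        have : C ≤ 2 ^ t * C := le_mul_of_one_le_left hC0.le h2t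
        linarith
      have hxpos : 0 < |w t| := lt_trans hC0 hxC
      have hApos : 0 < Real.exp |w t| - Real.exp (-|w t|) := by
        have : Real.exp (-|w t|) < Real.exp |w t| := Real.exp_lt_exp.mpr (by linarith)
        linarith
      have habsg : |Real.exp (w t) - Real.exp (-(w t))|
          = Real.exp |w t| - Real.exp (-|w t|) := by
        rcases le_or_gt 0 (w t) with h | h
        · rw [abs_of_nonneg h]
          have : Real.exp (-(w t)) ≤ Real.exp (w t) := Real.exp_le_exp.mpr (by linarith)
          rw [abs_of_nonneg (by linarith)]
        · rw [abs_of_neg h, neg_neg]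
          have : Real.exp (w t) < Real.exp (-(w t)) := Real.exp_lt_exp.mpr (by linarith)
          rw [abs_of_neg (by linarith), neg_sub]
      have hstep : |γ * (Real.exp (w t) - Real.exp (-(w t))) /
            |Real.exp (w t) - Real.exp (-(w t))| ^ β|
          = γ * (Real.exp |w t| - Real.exp (-|w t|)) ^ c := by
        rw [abs_div, abs_mul, abs_of_pos hγ, habsg,
          abs_of_nonneg (Real.rpow_nonneg hApos.le β),
          hc, Real.rpow_sub hApos, Real.rpow_one, mul_div_assoc]
      have hkey := key |w t| hxC
      have hbig : γ * (Real.exp |w t| - Real.exp (-|w t|)) ^ c > 3 * |w t| := by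
        have h1 := mul_lt_mul_of_pos_left hkey hγ
        nlinarith
      have hge : |w (t + 1)| ≥
          γ * (Real.exp |w t| - Real.exp (-|w t|)) ^ c - |w t| := by
        rw [hrec t, ← hstep]
        have h2 := abs_sub_abs_le_abs_sub
          (γ * (Real.exp (w t) - Real.exp (-(w t))) /
            |Real.exp (w t) - Real.exp (-(w t))| ^ β) (w t)
        have h3 := abs_sub_comm
          (γ * (Real.exp (w t) - Real.exp (-(w t))) /
            |Real.exp (w t) - Real.exp (-(w t))| ^ β) (w t)
        linarith
      have h2 : (2:ℝ) ^ (t + 1) * C = 2 * (2 ^ t * C) := by ring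
      rw [h2]
      linarith
end
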